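/- arXiv:math-ph/0610059 — 3 statements merged into one kernel-verified Lean document; each statement's English description precedes it below -/
import Mathlib

section
/- For every λ ∈ ℂ, every odd positive integer k, and every f ∈ {1, x, x², ξ, xξ} (a contact Hamiltonian of an element of osp(1|2)), the following operator identity holds: L^{λ+k/2}_{X_f} ∘ D̄^k − (−1)^{p(f)} D̄^k ∘ L^λ_{X_f} = (λ + (k−1)/4) · γ_k(X_f), where γ_k(X_f) = D³(f) · D̄^{k−1} + ((k−1)/2) · D⁴(f) · D̄^{k−2} (with the convention D̄^{−1} term absent when k=1). -/
/-- A superfunction `f(x,ξ) = f₀(x) + ξ f₁(x)` on `S^{1|1}`, encoded as the pair `(f₀, f₁)`. -/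
abbrev SF : Type := (ℝ → ℂ) × (ℝ → ℂ)

namespace SF

/-- The odd derivation `D̄ = ∂/∂ξ - ξ ∂/∂x`. -/
noncomputable def Dbar (f : SF) : SF := (f.2, fun x => -deriv f.1 x)

/-- The odd derivation `D = ∂/∂ξ + ξ ∂/∂x`. -/
noncomputable def Dop (f : SF) : SF := (f.2, fun x => deriv f.1 x)

/-- The even derivation `∂/∂x`, i.e. `f ↦ f′`. -/
noncomputable def dx (f : SF) : SF := (fun x => deriv f.1 x, fun x => deriv f.2 x)

/-- The odd derivation `∂/∂ξ`. -/
def dxi (f : SF) : SF := (f.2, 0)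

/-- Product of superfunctions: `(f₀ + ξf₁)(g₀ + ξg₁) = f₀g₀ + ξ(f₀g₁ + f₁g₀)`. -/
def mul (f g : SF) : SF := (f.1 * g.1, f.1 * g.2 + f.2 * g.1)

/-- The odd coordinate `ξ` as a superfunction. -/
def xi : SF := (0, fun _ => 1)

/-- The even coordinate `x` as a superfunction. -/
def xc : SF := (fun x => (x : ℂ), 0)

/-- `x²` as a superfunction. -/
def xc2 : SF := (fun x => (x : ℂ)^2, 0)

/-- `xξ` as a superfunction. -/
def xxi : SF := (0, fun x => (x : ℂ))

/-- The constant superfunction `1`. -/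
def one : SF := (fun _ => 1, 0)

/-- `f` is even: `f = f₀(x)`. -/
def IsEven (f : SF) : Prop := f.2 = 0

/-- `f` is odd: `f = ξ f₁(x)`. -/
def IsOdd (f : SF) : Prop := f.1 = 0

/-- `f` is homogeneous of parity `p` (`p = 0` even, `p = 1` odd). -/
def Homog (f : SF) (p : ℕ) : Prop := (p = 0 ∧ IsEven f) ∨ (p = 1 ∧ IsOdd f)

/-- `f` has smooth coefficients. -/
def Smooth (f : SF) : Prop := ContDiff ℝ (⊤ : ℕ∞) f.1 ∧ ContDiff ℝ (⊤ : ℕ∞) f.2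

/-- The contact vector field `X_f = -f D̄² + (1/2) D(f) D̄` with contact Hamiltonian `f`. -/
noncomputable def Xop (f : SF) (g : SF) : SF :=
  mul (-f) (Dbar (Dbar g)) + ((1:ℂ)/2) • mul (Dop f) (Dbar g)

/-- The action `L^λ_{X_f} = X_f + λ f′` on `λ`-densities. -/
noncomputable def Lden (lam : ℂ) (f : SF) (g : SF) : SF :=
  Xop f g + lam • mul (dx f) g

/-- The contact bracket `{f,g} = fg′ - f′g + (-1)^{p(f)(p(g)+1)} (1/2) D(f)D(g)`
for `f` of parity `pf` and `g` of parity `pg`. -/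
noncomputable def cbr (pf pg : ℕ) (f g : SF) : SF :=
  mul f (dx g) - mul (dx f) g + ((-1:ℂ)^(pf*(pg+1)) * ((1:ℂ)/2)) • mul (Dop f) (Dop g)

end SF

namespace Helpers

lemma contDiff_coe : ContDiff ℝ (⊤:ℕ∞) (fun x:ℝ => (x:ℂ)) :=
  Complex.ofRealCLM.contDiff

lemma contDiff_coe2 : ContDiff ℝ (⊤:ℕ∞) (fun x:ℝ => (x:ℂ)^2) :=
  contDiff_coe.pow 2

lemma hasDerivAt_coe (x : ℝ) : HasDerivAt (fun x:ℝ => (x:ℂ)) 1 x := by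
  exact (hasDerivAt_id x).ofReal_comp

lemma deriv_coe : deriv (fun x:ℝ => (x:ℂ)) = fun _ => 1 :=
  funext fun x => (hasDerivAt_coe x).deriv

lemma hasDerivAt_coe2 (x : ℝ) : HasDerivAt (fun x:ℝ => (x:ℂ)^2) (2*(x:ℂ)) x := by
  have h2 := (hasDerivAt_coe x).fun_mul (hasDerivAt_coe x)
  have e : (2*(x:ℂ)) = 1*(x:ℂ) + (x:ℂ)*1 := by ring
  rw [e]
  simpa [pow_two] using h2

lemma deriv_coe2 : deriv (fun x:ℝ => (x:ℂ)^2) = fun x : ℝ => 2*(x:ℂ) :=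
  funext fun x => (hasDerivAt_coe2 x).deriv

lemma diff_iter {h : ℝ → ℂ} (hh : ContDiff ℝ (⊤:ℕ∞) h) (m : ℕ) :
    Differentiable ℝ (deriv^[m] h) :=
  (hh.iterate_deriv m).differentiable (by simp)

lemma smooth_deriv {h : ℝ → ℂ} (hh : ContDiff ℝ (⊤:ℕ∞) h) :
    ContDiff ℝ (⊤:ℕ∞) (deriv h) := by
  simpa using hh.iterate_deriv 1

lemma iter_succ' (h : ℝ → ℂ) (n : ℕ) (x : ℝ) :
    deriv (deriv^[n] h) x = deriv^[n+1] h x :=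
  (congrFun (Function.iterate_succ_apply' deriv n h) x).symm

lemma iter_shift (h : ℝ → ℂ) (n : ℕ) :
    deriv^[n] (deriv h) = deriv^[n+1] h :=
  (Function.iterate_succ_apply deriv n h).symm

lemma iter_add {a b : ℝ → ℂ} (ha : ContDiff ℝ (⊤:ℕ∞) a) (hb : ContDiff ℝ (⊤:ℕ∞) b)
    (m : ℕ) :
    deriv^[m] (fun x => a x + b x) = fun x => deriv^[m] a x + deriv^[m] b x := by
  induction m generalizing a b with
  | zero => rfl
  | succ n ih =>
      rw [Function.iterate_succ_apply, Function.iterate_succ_apply,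
        Function.iterate_succ_apply]
      have e : deriv (fun x => a x + b x) = fun x => deriv a x + deriv b x := by
        funext x
        exact deriv_add (ha.differentiable (by simp) x)
          (hb.differentiable (by simp) x)
      rw [e, ih (smooth_deriv ha) (smooth_deriv hb)]


lemma iter_const_mul (c : ℂ) (h : ℝ → ℂ) (m : ℕ) :
    deriv^[m] (fun x => c * h x) = fun x => c * deriv^[m] h x := by
  induction m generalizing h with
  | zero => rfl
  | succ n ih =>
      rw [Function.iterate_succ_apply, Function.iterate_succ_apply,
        deriv_const_mul_field' c, ih]

lemma iter_x_mul {h : ℝ → ℂ} (hh : ContDiff ℝ (⊤:ℕ∞) h) (m : ℕ) :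
    deriv^[m] (fun x : ℝ => (x:ℂ) * h x)
      = fun x : ℝ => (x:ℂ) * deriv^[m] h x + (m:ℂ) * deriv^[m-1] h x := by
  induction m with
  | zero => funext x; simp
  | succ n ih =>
      rw [Function.iterate_succ_apply', ih]
      funext x
      have d1 : DifferentiableAt ℝ (fun x : ℝ => (x:ℂ) * deriv^[n] h x) x :=
        ((hasDerivAt_coe x).differentiableAt).mul (diff_iter hh n x)
      have d2 : DifferentiableAt ℝ (fun x : ℝ => (n:ℂ) * deriv^[n-1] h x) x :=
        (differentiableAt_const _).mul (diff_iter hh (n-1) x)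
      rw [deriv_fun_add d1 d2, deriv_fun_mul ((hasDerivAt_coe x).differentiableAt) (diff_iter hh n x),
        deriv_const_mul_field (n:ℂ), (hasDerivAt_coe x).deriv, iter_succ' h n x]
      cases n with
      | zero => simp; ring
      | succ j =>
          rw [Nat.add_sub_cancel, Nat.add_sub_cancel, iter_succ' h j x]
          push_cast; ring

lemma iter_x2_mul {h : ℝ → ℂ} (hh : ContDiff ℝ (⊤:ℕ∞) h) (m : ℕ) :
    deriv^[m] (fun x : ℝ => (x:ℂ)^2 * h x)
      = fun x : ℝ => (x:ℂ)^2 * deriv^[m] h x + 2*(m:ℂ)*(x:ℂ) * deriv^[m-1] h x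
          + (m:ℂ)*((m:ℂ)-1) * deriv^[m-2] h x := by
  induction m with
  | zero => funext x; simp
  | succ n ih =>
      rw [Function.iterate_succ_apply', ih]
      funext x
      have dx2 : HasDerivAt (fun x : ℝ => (x:ℂ)^2) (2*(x:ℂ)) x := by
        have h2 := (hasDerivAt_coe x).fun_mul (hasDerivAt_coe x)
        have e : (2*(x:ℂ)) = 1*(x:ℂ) + (x:ℂ)*1 := by ring
        rw [e]
        simpa [pow_two] using h2
      have d1 : DifferentiableAt ℝ (fun x : ℝ => (x:ℂ)^2 * deriv^[n] h x) x :=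
        dx2.differentiableAt.mul (diff_iter hh n x)
      have d2 : DifferentiableAt ℝ (fun x : ℝ => 2*(n:ℂ)*(x:ℂ) * deriv^[n-1] h x) x :=
        (((differentiableAt_const _).mul (hasDerivAt_coe x).differentiableAt)).mul
          (diff_iter hh (n-1) x)
      have d3 : DifferentiableAt ℝ (fun x : ℝ => (n:ℂ)*((n:ℂ)-1) * deriv^[n-2] h x) x :=
        (differentiableAt_const _).mul (diff_iter hh (n-2) x)
      rw [deriv_fun_add (d1.fun_add d2) d3, deriv_fun_add d1 d2,
        deriv_fun_mul dx2.differentiableAt (diff_iter hh n x), dx2.deriv,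
        deriv_const_mul_field ((n:ℂ)*((n:ℂ)-1))]
      have d2' : deriv (fun x : ℝ => 2*(n:ℂ)*(x:ℂ) * deriv^[n-1] h x) x
          = 2*(n:ℂ) * deriv^[n-1] h x + 2*(n:ℂ)*(x:ℂ) * deriv^[n-1+1] h x := by
        have : (fun x : ℝ => 2*(n:ℂ)*(x:ℂ) * deriv^[n-1] h x)
            = fun x : ℝ => 2*(n:ℂ) * ((x:ℂ) * deriv^[n-1] h x) := by
          funext y; ring
        rw [this, deriv_const_mul_field (2*(n:ℂ)),
          deriv_fun_mul (hasDerivAt_coe x).differentiableAt (diff_iter hh (n-1) x),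
          (hasDerivAt_coe x).deriv, iter_succ' h (n-1) x]
        ring
      rw [d2', iter_succ' h n x]
      cases n with
      | zero => simp; ring
      | succ j =>
          simp only [Nat.add_sub_cancel]
          cases j with
          | zero => norm_num; ring
          | succ i =>
              rw [show i+1+1-2 = i from rfl, show i+1+1+1-2 = i+1 from rfl, iter_succ' h i x]
              push_cast; ring


end Helpers

open Helpers

namespace SF

lemma dbar_even (g : SF) (m : ℕ) :
    Dbar^[2*m] g = (fun x => (-1:ℂ)^m * deriv^[m] g.1 x,
                    fun x => (-1:ℂ)^m * deriv^[m] g.2 x) := by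
  induction m with
  | zero =>
      simp only [Nat.mul_zero, Function.iterate_zero, id_eq]
      exact Prod.ext (by funext x; simp) (by funext x; simp)
  | succ n ih =>
      have e : 2*(n+1) = (2*n+1)+1 := by ring
      rw [e, Function.iterate_succ_apply', Function.iterate_succ_apply', ih]
      unfold Dbar
      refine Prod.ext ?_ ?_ <;> funext x <;>
        simp only [deriv_const_mul_field, iter_succ', pow_succ] <;> ring

lemma dbar_odd (g : SF) (m : ℕ) :
    Dbar^[2*m+1] g = (fun x => (-1:ℂ)^m * deriv^[m] g.2 x,
                      fun x => -((-1:ℂ)^m) * deriv^[m+1] g.1 x) := by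
  rw [Function.iterate_succ_apply', dbar_even]
  unfold Dbar
  refine Prod.ext ?_ ?_ <;> funext x <;>
    simp only [deriv_const_mul_field, iter_succ'] <;> ring

/-- Explicit componentwise form of `Lden`. -/
lemma Lden_pair (lam : ℂ) (f h : SF) :
    Lden lam f h
      = (fun x => f.1 x * deriv h.1 x + (1/2) * f.2 x * h.2 x + lam * deriv f.1 x * h.1 x,
         fun x => f.1 x * deriv h.2 x + (1/2) * f.2 x * deriv h.1 x
           + (1/2) * deriv f.1 x * h.2 x + lam * (deriv f.1 x * h.2 x + deriv f.2 x * h.1 x)) := by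
  unfold Lden Xop mul Dop Dbar dx
  refine Prod.ext ?_ ?_ <;> funext x <;>
    simp only [Prod.fst_add, Prod.snd_add, Prod.smul_fst, Prod.smul_snd, Pi.add_apply,
      Pi.smul_apply, Pi.mul_apply, smul_eq_mul, Prod.fst_neg, Prod.snd_neg, Pi.neg_apply,
      deriv.neg'] <;> ring

end SF

open SF

lemma deriv_zero_fun : deriv (0:ℝ→ℂ) = 0 := by
  funext x
  simp [show (0:ℝ→ℂ) = fun _ => (0:ℂ) from rfl]

lemma mul_zero_left (h : SF) : SF.mul 0 h = 0 := by
  unfold SF.mul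
  refine Prod.ext ?_ ?_ <;> funext x <;>
    simp


section MainCases

variable (lam : ℂ) (m : ℕ) (g : SF)

lemma case_one (hg : Smooth g) :
    Lden (lam + ((2*m+1:ℕ):ℂ)/2) one (Dbar^[2*m+1] g)
      - (-1:ℂ)^(0:ℕ) • Dbar^[2*m+1] (Lden lam one g)
      = (lam + (((2*m+1:ℕ):ℂ) - 1)/4) •
          (mul (Dop^[3] one) (Dbar^[2*m+1-1] g)
            + ((((2*m+1:ℕ):ℂ) - 1)/2) • mul (Dop^[4] one) (Dbar^[2*m+1-2] g)) := by
  have hu : ContDiff ℝ (⊤:ℕ∞) g.1 := hg.1.of_le (by simp)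
  have hv : ContDiff ℝ (⊤:ℕ∞) g.2 := hg.2.of_le (by simp)
  have h3 : Dop^[3] SF.one = 0 := by
    show Dop (Dop (Dop SF.one)) = 0
    unfold Dop SF.one
    refine Prod.ext ?_ ?_ <;> funext x <;> simp [deriv_zero_fun, deriv_const]
  have h4 : Dop^[4] SF.one = 0 := by
    show Dop (Dop^[3] SF.one) = 0
    rw [h3]; unfold Dop
    refine Prod.ext ?_ ?_ <;> funext x <;> simp [deriv_zero_fun]
  rw [h3, h4, mul_zero_left, mul_zero_left]
  have hQ : Lden lam SF.one g = (fun x : ℝ => deriv g.1 x, fun x : ℝ => deriv g.2 x) := by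
    rw [Lden_pair]
    unfold SF.one
    refine Prod.ext ?_ ?_ <;> funext x <;>
      simp only [deriv_const, deriv_zero_fun, Pi.zero_apply] <;> ring
  rw [hQ, dbar_odd g m, Lden_pair, dbar_odd]
  refine Prod.ext ?_ ?_ <;> funext x <;>
    simp only [iter_shift, deriv_const_mul_field, iter_succ', deriv_const, deriv_zero_fun,
      Prod.fst_sub, Prod.snd_sub, Pi.sub_apply, Prod.smul_fst, Prod.smul_snd,
      Pi.smul_apply, smul_eq_mul, Prod.fst_add, Prod.snd_add, Pi.add_apply,
      Prod.fst_zero, Prod.snd_zero, Pi.zero_apply, pow_zero, one_mul, smul_zero, add_zero,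
      SF.one] <;>
    ring

lemma case_xc (hg : Smooth g) :
    Lden (lam + ((2*m+1:ℕ):ℂ)/2) xc (Dbar^[2*m+1] g)
      - (-1:ℂ)^(0:ℕ) • Dbar^[2*m+1] (Lden lam xc g)
      = (lam + (((2*m+1:ℕ):ℂ) - 1)/4) •
          (mul (Dop^[3] xc) (Dbar^[2*m+1-1] g)
            + ((((2*m+1:ℕ):ℂ) - 1)/2) • mul (Dop^[4] xc) (Dbar^[2*m+1-2] g)) := by
  have hu : ContDiff ℝ (⊤:ℕ∞) g.1 := hg.1.of_le (by simp)
  have hv : ContDiff ℝ (⊤:ℕ∞) g.2 := hg.2.of_le (by simp)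
  have h3 : Dop^[3] xc = 0 := by
    show Dop (Dop (Dop xc)) = 0
    unfold Dop xc
    simp only [deriv_coe]
    refine Prod.ext ?_ ?_ <;> funext x <;> simp [deriv_zero_fun, deriv_const]
  have h4 : Dop^[4] xc = 0 := by
    show Dop (Dop^[3] xc) = 0
    rw [h3]; unfold Dop
    refine Prod.ext ?_ ?_ <;> funext x <;> simp [deriv_zero_fun]
  rw [h3, h4, mul_zero_left, mul_zero_left]
  have hQ : Lden lam xc g = (fun x : ℝ => (x:ℂ) * deriv g.1 x + lam * g.1 x,
                             fun x : ℝ => (x:ℂ) * deriv g.2 x + (lam + 1/2) * g.2 x) := by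
    rw [Lden_pair]
    unfold xc
    refine Prod.ext ?_ ?_ <;> funext x <;>
      simp only [deriv_coe, deriv_zero_fun, Pi.zero_apply] <;> ring
  rw [hQ, dbar_odd g m, Lden_pair, dbar_odd]
  refine Prod.ext ?_ ?_ <;> funext x <;>
    simp only [iter_add (contDiff_coe.mul (smooth_deriv hv)) (contDiff_const.mul hv) m,
      iter_add (contDiff_coe.mul (smooth_deriv hu)) (contDiff_const.mul hu) (m+1),
      iter_x_mul (smooth_deriv hv) m, iter_x_mul (smooth_deriv hu) (m+1),
      iter_const_mul, iter_shift, deriv_const_mul_field, iter_succ',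
      Nat.add_sub_cancel, deriv_coe, deriv_zero_fun,
      Prod.fst_sub, Prod.snd_sub, Pi.sub_apply, Prod.smul_fst, Prod.smul_snd,
      Pi.smul_apply, smul_eq_mul, Prod.fst_add, Prod.snd_add, Pi.add_apply,
      Prod.fst_zero, Prod.snd_zero, Pi.zero_apply, pow_zero, one_mul, smul_zero, add_zero,
      xc] <;>
    rcases m with _|n <;>
    push_cast [Nat.add_sub_cancel, Function.iterate_one, Function.iterate_zero_apply] <;>
    ring

lemma case_xi (hg : Smooth g) :
    Lden (lam + ((2*m+1:ℕ):ℂ)/2) xi (Dbar^[2*m+1] g)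
      - (-1:ℂ)^(1:ℕ) • Dbar^[2*m+1] (Lden lam xi g)
      = (lam + (((2*m+1:ℕ):ℂ) - 1)/4) •
          (mul (Dop^[3] xi) (Dbar^[2*m+1-1] g)
            + ((((2*m+1:ℕ):ℂ) - 1)/2) • mul (Dop^[4] xi) (Dbar^[2*m+1-2] g)) := by
  have hu : ContDiff ℝ (⊤:ℕ∞) g.1 := hg.1.of_le (by simp)
  have hv : ContDiff ℝ (⊤:ℕ∞) g.2 := hg.2.of_le (by simp)
  have h3 : Dop^[3] xi = 0 := by
    show Dop (Dop (Dop xi)) = 0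
    unfold Dop xi
    refine Prod.ext ?_ ?_ <;> funext x <;> simp [deriv_zero_fun, deriv_const]
  have h4 : Dop^[4] xi = 0 := by
    show Dop (Dop^[3] xi) = 0
    rw [h3]; unfold Dop
    refine Prod.ext ?_ ?_ <;> funext x <;> simp [deriv_zero_fun]
  rw [h3, h4, mul_zero_left, mul_zero_left]
  have hQ : Lden lam xi g = (fun x : ℝ => (1/2 : ℂ) * g.2 x,
                             fun x : ℝ => (1/2 : ℂ) * deriv g.1 x) := by
    rw [Lden_pair]
    unfold xi
    refine Prod.ext ?_ ?_ <;> funext x <;>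
      simp only [deriv_const, deriv_zero_fun, Pi.zero_apply] <;> ring
  rw [hQ, dbar_odd g m, Lden_pair, dbar_odd]
  refine Prod.ext ?_ ?_ <;> funext x <;>
    simp only [iter_const_mul, iter_shift, deriv_const_mul_field, iter_succ',
      deriv_const, deriv_zero_fun,
      Prod.fst_sub, Prod.snd_sub, Pi.sub_apply, Prod.smul_fst, Prod.smul_snd,
      Pi.smul_apply, smul_eq_mul, Prod.fst_add, Prod.snd_add, Pi.add_apply,
      Prod.fst_zero, Prod.snd_zero, Pi.zero_apply, pow_one, smul_zero, add_zero,
      xi] <;>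
    ring

lemma case_xxi (hg : Smooth g) :
    Lden (lam + ((2*m+1:ℕ):ℂ)/2) xxi (Dbar^[2*m+1] g)
      - (-1:ℂ)^(1:ℕ) • Dbar^[2*m+1] (Lden lam xxi g)
      = (lam + (((2*m+1:ℕ):ℂ) - 1)/4) •
          (mul (Dop^[3] xxi) (Dbar^[2*m+1-1] g)
            + ((((2*m+1:ℕ):ℂ) - 1)/2) • mul (Dop^[4] xxi) (Dbar^[2*m+1-2] g)) := by
  have hu : ContDiff ℝ (⊤:ℕ∞) g.1 := hg.1.of_le (by simp)
  have hv : ContDiff ℝ (⊤:ℕ∞) g.2 := hg.2.of_le (by simp)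
  have h3 : Dop^[3] xxi = SF.one := by
    show Dop (Dop (Dop xxi)) = SF.one
    unfold Dop xxi SF.one
    simp only [deriv_coe]
    refine Prod.ext ?_ ?_ <;> funext x <;> simp [deriv_zero_fun, deriv_const]
  have h4 : Dop^[4] xxi = 0 := by
    show Dop (Dop^[3] xxi) = 0
    rw [h3]; unfold Dop SF.one
    refine Prod.ext ?_ ?_ <;> funext x <;> simp [deriv_zero_fun, deriv_const]
  rw [h3, h4, mul_zero_left]
  have hQ : Lden lam xxi g
      = (fun x : ℝ => (1/2 : ℂ) * ((x:ℂ) * g.2 x),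
         fun x : ℝ => (1/2 : ℂ) * ((x:ℂ) * deriv g.1 x) + lam * g.1 x) := by
    rw [Lden_pair]
    unfold xxi
    refine Prod.ext ?_ ?_ <;> funext x <;>
      simp only [deriv_coe, deriv_zero_fun, Pi.zero_apply] <;> ring
  rw [hQ, dbar_odd g m, Lden_pair, dbar_odd,
    show 2*m+1-1 = 2*m from rfl, dbar_even g m]
  refine Prod.ext ?_ ?_ <;> funext x <;>
    simp only [iter_add (contDiff_const.mul (contDiff_coe.mul (smooth_deriv hu)))
        (contDiff_const.mul hu) m,
      iter_const_mul, iter_x_mul (smooth_deriv hu) m, iter_x_mul hv m, iter_x_mul hv (m+1),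
      iter_shift, deriv_const_mul_field, iter_succ',
      Nat.add_sub_cancel, deriv_coe, deriv_zero_fun, deriv_const,
      Prod.fst_sub, Prod.snd_sub, Pi.sub_apply, Prod.smul_fst, Prod.smul_snd,
      Pi.smul_apply, smul_eq_mul, Prod.fst_add, Prod.snd_add, Pi.add_apply,
      Prod.fst_zero, Prod.snd_zero, Pi.zero_apply, pow_one, smul_zero, add_zero,
      xxi, SF.one, SF.mul, Pi.mul_apply, zero_mul] <;>
    rcases m with _|n <;>
    push_cast [Nat.add_sub_cancel, Function.iterate_one, Function.iterate_zero_apply] <;>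
    ring

lemma case_xc2 (hg : Smooth g) :
    Lden (lam + ((2*m+1:ℕ):ℂ)/2) xc2 (Dbar^[2*m+1] g)
      - (-1:ℂ)^(0:ℕ) • Dbar^[2*m+1] (Lden lam xc2 g)
      = (lam + (((2*m+1:ℕ):ℂ) - 1)/4) •
          (mul (Dop^[3] xc2) (Dbar^[2*m+1-1] g)
            + ((((2*m+1:ℕ):ℂ) - 1)/2) • mul (Dop^[4] xc2) (Dbar^[2*m+1-2] g)) := by
  have hu : ContDiff ℝ (⊤:ℕ∞) g.1 := hg.1.of_le (by simp)
  have hv : ContDiff ℝ (⊤:ℕ∞) g.2 := hg.2.of_le (by simp)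
  have h3 : Dop^[3] xc2 = (0, fun _ : ℝ => (2:ℂ)) := by
    show Dop (Dop (Dop xc2)) = _
    unfold Dop xc2
    simp only [deriv_coe2]
    refine Prod.ext ?_ ?_ <;> funext x <;>
      simp [deriv_zero_fun, deriv_const_mul_field, deriv_coe]
  have h4 : Dop^[4] xc2 = (fun _ : ℝ => (2:ℂ), 0) := by
    show Dop (Dop^[3] xc2) = _
    rw [h3]; unfold Dop
    refine Prod.ext ?_ ?_ <;> funext x <;> simp [deriv_zero_fun, deriv_const]
  have hQ : Lden lam xc2 g
      = (fun x : ℝ => (x:ℂ)^2 * deriv g.1 x + (2*lam) * ((x:ℂ) * g.1 x),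
         fun x : ℝ => (x:ℂ)^2 * deriv g.2 x + (2*lam+1) * ((x:ℂ) * g.2 x)) := by
    rw [Lden_pair]
    unfold xc2
    refine Prod.ext ?_ ?_ <;> funext x <;>
      simp only [deriv_coe2, deriv_zero_fun, Pi.zero_apply] <;> ring
  rw [h3, h4, hQ, dbar_odd g m, Lden_pair, dbar_odd,
    show 2*m+1-1 = 2*m from rfl, dbar_even g m]
  rcases m with _|_|i
  · rw [show 2*0+1-2 = 0 from rfl]
    refine Prod.ext ?_ ?_ <;> funext x <;>
      simp only [iter_add (contDiff_coe2.mul (smooth_deriv hv))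
          (contDiff_const.mul (contDiff_coe.mul hv)) 0,
        iter_add (contDiff_coe2.mul (smooth_deriv hu))
          (contDiff_const.mul (contDiff_coe.mul hu)) 1,
        iter_x2_mul (smooth_deriv hv) 0, iter_x2_mul (smooth_deriv hu) 1,
        iter_x_mul hv 0, iter_x_mul hu 1,
        iter_const_mul, iter_shift, deriv_const_mul_field, iter_succ',
        deriv_coe2, deriv_coe, deriv_zero_fun, Function.iterate_zero, id_eq,
        Prod.fst_sub, Prod.snd_sub, Pi.sub_apply, Prod.smul_fst, Prod.smul_snd,
        Pi.smul_apply, smul_eq_mul, Prod.fst_add, Prod.snd_add, Pi.add_apply,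
        Prod.fst_zero, Prod.snd_zero, Pi.zero_apply, pow_zero, one_mul,
        Pi.mul_apply, zero_mul, SF.mul, xc2, Function.iterate_zero_apply, Function.iterate_one] <;>
      push_cast [Function.iterate_one, Function.iterate_zero_apply] <;> ring
  · rw [show 2*1+1-2 = 2*0+1 from rfl, dbar_odd g 0]
    refine Prod.ext ?_ ?_ <;> funext x <;>
      simp only [iter_add (contDiff_coe2.mul (smooth_deriv hv))
          (contDiff_const.mul (contDiff_coe.mul hv)) 1,
        iter_add (contDiff_coe2.mul (smooth_deriv hu))
          (contDiff_const.mul (contDiff_coe.mul hu)) 2,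
        iter_x2_mul (smooth_deriv hv) 1, iter_x2_mul (smooth_deriv hu) 2,
        iter_x_mul hv 1, iter_x_mul hu 2,
        iter_const_mul, iter_shift, deriv_const_mul_field, iter_succ',
        deriv_coe2, deriv_coe, deriv_zero_fun, Function.iterate_zero, id_eq,
        Prod.fst_sub, Prod.snd_sub, Pi.sub_apply, Prod.smul_fst, Prod.smul_snd,
        Pi.smul_apply, smul_eq_mul, Prod.fst_add, Prod.snd_add, Pi.add_apply,
        Prod.fst_zero, Prod.snd_zero, Pi.zero_apply, pow_zero, one_mul,
        Pi.mul_apply, zero_mul, SF.mul, xc2, Function.iterate_zero_apply, Function.iterate_one] <;>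
      push_cast [Function.iterate_one, Function.iterate_zero_apply] <;> ring
  · rw [show 2*(i+2)+1-2 = 2*(i+1)+1 by omega, dbar_odd g (i+1)]
    refine Prod.ext ?_ ?_ <;> funext x <;>
      simp only [iter_add (contDiff_coe2.mul (smooth_deriv hv))
          (contDiff_const.mul (contDiff_coe.mul hv)) (i+2),
        iter_add (contDiff_coe2.mul (smooth_deriv hu))
          (contDiff_const.mul (contDiff_coe.mul hu)) (i+2+1),
        iter_x2_mul (smooth_deriv hv) (i+2), iter_x2_mul (smooth_deriv hu) (i+2+1),
        iter_x_mul hv (i+2), iter_x_mul hu (i+2+1),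
        show i+2-1 = i+1 from rfl, show i+2-2 = i from rfl,
        show i+2+1-1 = i+2 from rfl, show i+2+1-2 = i+1 from rfl,
        iter_const_mul, iter_shift, deriv_const_mul_field, iter_succ',
        deriv_coe2, deriv_coe, deriv_zero_fun,
        Prod.fst_sub, Prod.snd_sub, Pi.sub_apply, Prod.smul_fst, Prod.smul_snd,
        Pi.smul_apply, smul_eq_mul, Prod.fst_add, Prod.snd_add, Pi.add_apply,
        Prod.fst_zero, Prod.snd_zero, Pi.zero_apply, pow_zero, one_mul,
        Pi.mul_apply, zero_mul, SF.mul, xc2, Function.iterate_zero_apply, Function.iterate_one] <;>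
      push_cast [Function.iterate_one, Function.iterate_zero_apply] <;> ring

end MainCases

/-- the operator `L^{λ+k/2}_{X_f} ∘ D̄^k - (-1)^{p(f)} D̄^k ∘ L^λ_{X_f}`
equals `(λ + (k-1)/4) γ_k(X_f)` on osp(1|2), where
`γ_k(X_f) = D³(f) D̄^{k-1} + ((k-1)/2) D⁴(f) D̄^{k-2}`. -/
theorem coboundary_of_bol (lam : ℂ) (k : ℕ) (hk : Odd k) (f : SF) (pf : ℕ)
    (hf : (f, pf) ∈ [(one, 0), (xc, 0), (xc2, 0), (xi, 1), (xxi, 1)])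
    (g : SF) (hg : Smooth g) :
    Lden (lam + (k:ℂ)/2) f (Dbar^[k] g) - (-1:ℂ)^pf • Dbar^[k] (Lden lam f g)
      = (lam + ((k:ℂ) - 1)/4) •
          (mul (Dop^[3] f) (Dbar^[k-1] g)
            + (((k:ℂ) - 1)/2) • mul (Dop^[4] f) (Dbar^[k-2] g)) := by
  obtain ⟨m, rfl⟩ : ∃ m, k = 2*m+1 := by
    obtain ⟨m, hm⟩ := hk; exact ⟨m, by omega⟩
  simp only [List.mem_cons, List.not_mem_nil, or_false, Prod.mk.injEq] at hf
  rcases hf with ⟨rfl, rfl⟩|⟨rfl, rfl⟩|⟨rfl, rfl⟩|⟨rfl, rfl⟩|⟨rfl, rfl⟩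
  · exact case_one lam m g hg
  · exact case_xc lam m g hg
  · exact case_xc2 lam m g hg
  · exact case_xi lam m g hg
  · exact case_xxi lam m g hg
end

section
/- For k = 1, the 1-cocycle γ₁ on osp(1|2) with values in D_{0,1/2}, given by γ₁(X_{x²}) = 2ξ (multiplication operator), γ₁(X_{xξ}) = 1 (identity), γ₁(X_f)=0 for f ∈ {1,x,ξ}, is not a coboundary: there is no differential operator A = Σ_{i=0}^{N} a_i(x,ξ) D̄^i from F_0 to F_{1/2} such that γ₁(X_f) = L^{1/2}_{X_f}∘A − (−1)^{p(f)p(A)} A∘L^0_{X_f} for all f ∈ {1, x, x², ξ, xξ}. -/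
open SF

namespace SF
/-- The 1-cocycle `γ₁` on osp(1|2) with values in `D_{0,1/2}`:
`γ₁(X_{x²}) = 2ξ` (multiplication), `γ₁(X_{xξ}) = 1` (identity),
`γ₁(X_f) = 0` for `f ∈ {1, x, ξ}`, extended linearly. -/
noncomputable def gamOne (f : SF) (g : SF) : SF :=
  (((1:ℂ)/2) * deriv (deriv f.1) 0) • mul ((2:ℂ) • xi) g + (deriv f.2 0) • g
end SF

lemma SF.Dbar_zero : Dbar (0 : SF) = 0 := by
  unfold Dbar
  refine Prod.ext rfl ?_
  funext x
  show -deriv (fun _ : ℝ => (0:ℂ)) x = 0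
  simp

lemma SF.Dbar_one : Dbar SF.one = 0 := by
  unfold Dbar one
  refine Prod.ext rfl ?_
  funext x
  simp

lemma SF.mul_zero' (f : SF) : SF.mul f 0 = 0 := by
  unfold SF.mul
  refine Prod.ext ?_ ?_ <;> funext x <;>
    simp [show ((0:SF).1 : ℝ → ℂ) = fun _ => 0 from rfl,
          show ((0:SF).2 : ℝ → ℂ) = fun _ => 0 from rfl]

lemma SF.Dbar_iter_zero (i : ℕ) : Dbar^[i] (0 : SF) = 0 :=
  Function.iterate_fixed SF.Dbar_zero i

lemma SF.Dbar_iter_one (i : ℕ) : Dbar^[i+1] SF.one = 0 := by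
  rw [Function.iterate_succ_apply, SF.Dbar_one, SF.Dbar_iter_zero]

lemma SF.Lden_zero_xxi_one : Lden 0 xxi SF.one = 0 := by
  unfold Lden Xop
  rw [SF.Dbar_one, SF.Dbar_zero, SF.mul_zero', SF.mul_zero']
  simp

lemma SF.deriv_ofReal : deriv (fun x : ℝ => (x : ℂ)) 0 = 1 := by
  have h : HasDerivAt (fun x : ℝ => (x : ℂ)) 1 0 := by
    simpa using (hasDerivAt_id (0:ℝ)).ofReal_comp
  exact h.deriv

/-- the cocycle `γ₁` is not a coboundary: no odd differential
operator `A = Σ_{i=0}^N a_i D̄^i : F_0 → F_{1/2}` satisfies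
`γ₁(X_f) = L^{1/2}_{X_f} ∘ A - (-1)^{p(f)p(A)} A ∘ L^0_{X_f}` on osp(1|2). -/
theorem gamma_one_not_coboundary :
    ¬ ∃ (N : ℕ) (a : ℕ → SF),
      (∀ i, Smooth (a i)) ∧
      (∀ i, Function.Periodic (a i).1 (2*Real.pi) ∧
            Function.Periodic (a i).2 (2*Real.pi)) ∧
      (∀ i, Homog (a i) ((i + 1) % 2)) ∧
      (∀ (f : SF) (pf : ℕ),
        (f, pf) ∈ [(one, 0), (xc, 0), (xc2, 0), (xi, 1), (xxi, 1)] →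
        ∀ h : SF, Smooth h →
          Function.Periodic h.1 (2*Real.pi) → Function.Periodic h.2 (2*Real.pi) →
          gamOne f h
            = Lden ((1:ℂ)/2) f (∑ i ∈ Finset.range (N+1), mul (a i) (Dbar^[i] h))
              - (-1:ℂ)^(pf*1) •
                  ∑ i ∈ Finset.range (N+1), mul (a i) (Dbar^[i] (Lden 0 f h))) := by
  rintro ⟨N, a, hsm, hper, hhom, hmain⟩
  have hone_smooth : Smooth SF.one := ⟨contDiff_const, contDiff_const⟩
  have hone_per1 : Function.Periodic (SF.one).1 (2*Real.pi) := fun x => rfl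
  have hone_per2 : Function.Periodic (SF.one).2 (2*Real.pi) := fun x => rfl
  have E := hmain xxi 1 (by simp) SF.one hone_smooth hone_per1 hone_per2
  -- the second sum vanishes
  have hsum2 : ∑ i ∈ Finset.range (N+1), mul (a i) (Dbar^[i] (Lden 0 xxi SF.one)) = 0 := by
    rw [SF.Lden_zero_xxi_one]
    refine Finset.sum_eq_zero fun i _ => ?_
    rw [SF.Dbar_iter_zero, SF.mul_zero']
  -- the first sum reduces to its i = 0 term
  have hsum1 : ∑ i ∈ Finset.range (N+1), mul (a i) (Dbar^[i] SF.one)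
      = mul (a 0) SF.one := by
    refine Finset.sum_eq_single 0 (fun i _ hi => ?_) (fun h => absurd (Finset.mem_range.mpr (Nat.succ_pos N)) h)
    obtain ⟨j, rfl⟩ := Nat.exists_eq_succ_of_ne_zero hi
    rw [SF.Dbar_iter_one, SF.mul_zero']
  rw [hsum1, hsum2, smul_zero, sub_zero] at E
  have E1 := congrFun (congrArg Prod.fst E) 0
  -- compute the left-hand side: it equals 1
  have hL : (gamOne xxi SF.one).1 0 = 1 := by
    unfold gamOne xxi xi SF.one SF.mul
    simp [SF.deriv_ofReal]
  -- compute the right-hand side: it equals 0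
  have hR : (Lden ((1:ℂ)/2) xxi (mul (a 0) SF.one)).1 0 = 0 := by
    unfold Lden Xop SF.mul Dbar Dop dx xxi
    have h1 : deriv ((0 : ℝ → ℂ)) 0 = 0 := by
      have : ((0 : ℝ → ℂ)) = fun _ => (0:ℂ) := rfl
      rw [this, deriv_const]
    simp [h1]
  rw [hL, hR] at E1
  exact one_ne_zero E1
end

section
/- (Equivariance of the principal symbol) Let A = a(x,ξ) D̄^ℓ + (lower order terms in D̄) be a differential operator from λ-densities to μ-densities, and let the K(1)-action on operators be L_{X_f}(A) = L^μ_{X_f}∘A − (−1)^{p(f)p(A)} A∘L^λ_{X_f}. Then the D̄^ℓ-coefficient of L_{X_f}(A) equals L^{μ−λ−ℓ/2}_{X_f}(a), i.e. the principal symbol map A ↦ a·α^{μ−λ−ℓ/2} is K(1)-equivariant. -/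
namespace SF

/-! ### Algebraic lemmas -/

lemma mul_comm' (x y : SF) : mul x y = mul y x :=
  Prod.ext (by unfold mul; ring) (by unfold mul; simp; ring)

lemma mul_assoc' (x y z : SF) : mul (mul x y) z = mul x (mul y z) :=
  Prod.ext (by simp [mul]; ring) (by simp [mul]; ring)

lemma mul_left_comm' (x y z : SF) : mul x (mul y z) = mul y (mul x z) := by
  rw [← mul_assoc', mul_comm' x y, mul_assoc']

lemma mul_add' (x y z : SF) : mul x (y + z) = mul x y + mul x z :=
  Prod.ext (by simp [mul]; ring) (by simp [mul]; ring)

lemma add_mul' (x y z : SF) : mul (x + y) z = mul x z + mul y z :=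
  Prod.ext (by simp [mul]; ring) (by simp [mul]; ring)

lemma smul_mul' (c : ℂ) (x y : SF) : mul (c • x) y = c • mul x y :=
  Prod.ext (by simp [mul, Pi.smul_def, smul_eq_mul]; funext t; simp; ring)
    (by simp [mul, Pi.smul_def, smul_eq_mul]; funext t; simp; ring)

lemma mul_smul'' (c : ℂ) (x y : SF) : mul x (c • y) = c • mul x y := by
  rw [mul_comm', smul_mul', mul_comm']

lemma zero_mul' (x : SF) : mul 0 x = 0 :=
  Prod.ext (by simp [mul]) (by simp [mul])

lemma mul_zero'_s15 (x : SF) : mul x 0 = 0 := by rw [mul_comm', zero_mul']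

lemma neg_mul' (x y : SF) : mul (-x) y = -mul x y :=
  Prod.ext (by simp [mul]) (by simp [mul]; funext t; simp [Pi.sub_apply]; ring)

lemma mul_neg' (x y : SF) : mul x (-y) = -mul x y := by
  rw [mul_comm', neg_mul', mul_comm']

lemma sub_mul' (x y z : SF) : mul (x - y) z = mul x z - mul y z := by
  rw [sub_eq_add_neg, add_mul', neg_mul', ← sub_eq_add_neg]

lemma mul_sum (x : SF) (s : Finset ℕ) (g : ℕ → SF) :
    mul x (∑ i ∈ s, g i) = ∑ i ∈ s, mul x (g i) := by
  classical
  induction s using Finset.induction_on with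
  | empty => simp [mul_zero'_s15]
  | insert n s' hns ih => rw [Finset.sum_insert hns, Finset.sum_insert hns, mul_add', ih]


/-! ### Parity lemmas -/

lemma deriv_zero_fun : deriv (0 : ℝ → ℂ) = 0 := by
  funext t; exact deriv_const t 0

lemma odd_mul_odd {x y : SF} (hx : IsOdd x) (hy : IsOdd y) : mul x y = 0 := by
  unfold IsOdd at hx hy
  refine Prod.ext ?_ ?_ <;> simp [mul, hx, hy]

lemma IsEven.dbar {x : SF} (hx : IsEven x) : IsOdd (Dbar x) := hx

lemma IsOdd.dbar {x : SF} (hx : IsOdd x) : IsEven (Dbar x) := by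
  unfold IsOdd at hx
  show (fun t => -deriv x.1 t) = 0
  funext t; simp [hx, deriv_zero_fun]

lemma IsEven.dop {x : SF} (hx : IsEven x) : IsOdd (Dop x) := hx

lemma IsOdd.dop {x : SF} (hx : IsOdd x) : IsEven (Dop x) := by
  unfold IsOdd at hx
  show (fun t => deriv x.1 t) = 0
  funext t; simp [hx, deriv_zero_fun]

lemma IsEven.dx {x : SF} (hx : IsEven x) : IsEven (dx x) := by
  unfold IsEven at hx ⊢
  show (fun t => deriv x.2 t) = 0
  funext t; simp [hx, deriv_zero_fun]

lemma IsOdd.dx {x : SF} (hx : IsOdd x) : IsOdd (dx x) := by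
  unfold IsOdd at hx ⊢
  show (fun t => deriv x.1 t) = 0
  funext t; simp [hx, deriv_zero_fun]

/-! ### Smoothness lemmas -/

lemma Smooth.add' {x y : SF} (hx : Smooth x) (hy : Smooth y) : Smooth (x + y) :=
  ⟨hx.1.add hy.1, hx.2.add hy.2⟩

lemma Smooth.smul' (c : ℂ) {x : SF} (hx : Smooth x) : Smooth (c • x) :=
  ⟨hx.1.const_smul c, hx.2.const_smul c⟩

lemma Smooth.neg' {x : SF} (hx : Smooth x) : Smooth (-x) := ⟨hx.1.neg, hx.2.neg⟩

lemma Smooth.mul' {x y : SF} (hx : Smooth x) (hy : Smooth y) : Smooth (mul x y) :=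
  ⟨hx.1.mul hy.1, (hx.1.mul hy.2).add (hx.2.mul hy.1)⟩

lemma contdiff_deriv {g : ℝ → ℂ} (hg : ContDiff ℝ (⊤ : ℕ∞) g) : ContDiff ℝ (⊤ : ℕ∞) (deriv g) := by
  have h : ContDiff ℝ (((⊤ : ℕ∞) : WithTop ℕ∞) + 1) g := by
    rw [show (((⊤ : ℕ∞) : WithTop ℕ∞) + 1) = ((⊤ : ℕ∞) : WithTop ℕ∞) from by
      rw [← WithTop.coe_one, ← WithTop.coe_add, top_add]]; exact hg
  exact (contDiff_succ_iff_deriv.mp h).2.2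

lemma Smooth.d1 {x : SF} (hx : Smooth x) : ContDiff ℝ (⊤ : ℕ∞) (deriv x.1) :=
  contdiff_deriv hx.1

lemma Smooth.d2 {x : SF} (hx : Smooth x) : ContDiff ℝ (⊤ : ℕ∞) (deriv x.2) :=
  contdiff_deriv hx.2

lemma Smooth.dbar' {x : SF} (hx : Smooth x) : Smooth (Dbar x) :=
  ⟨hx.2, hx.d1.neg⟩

lemma Smooth.dop' {x : SF} (hx : Smooth x) : Smooth (Dop x) :=
  ⟨hx.2, hx.d1⟩

lemma Smooth.dx' {x : SF} (hx : Smooth x) : Smooth (dx x) :=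
  ⟨hx.d1, hx.d2⟩

lemma Smooth.xop' {f g : SF} (hf : Smooth f) (hg : Smooth g) : Smooth (Xop f g) :=
  (hf.neg'.mul' hg.dbar'.dbar').add' (((hf.dop'.mul' hg.dbar')).smul' _)

lemma Smooth.lden' {f g : SF} (lam : ℂ) (hf : Smooth f) (hg : Smooth g) :
    Smooth (Lden lam f g) :=
  (hf.xop' hg).add' ((hf.dx'.mul' hg).smul' _)

/-! ### Derivation identities -/

lemma dbar_dbar (x : SF) : Dbar (Dbar x) = -(dx x) := by
  refine Prod.ext ?_ ?_ <;> funext t <;> simp [Dbar, dx]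

lemma dx_dbar (x : SF) : dx (Dbar x) = Dbar (dx x) := by
  refine Prod.ext rfl ?_
  show (fun t => deriv (fun s => -deriv x.1 s) t) = fun t => -deriv (fun s => deriv x.1 s) t
  funext t
  simp [deriv.neg]

lemma dbar_add {x y : SF} (hx : Smooth x) (hy : Smooth y) :
    Dbar (x + y) = Dbar x + Dbar y := by
  refine Prod.ext rfl ?_
  show (fun t => -deriv (x.1 + y.1) t) = (fun t => -deriv x.1 t) + fun t => -deriv y.1 t
  funext t
  have : deriv (x.1 + y.1) t = deriv x.1 t + deriv y.1 t := by
    rw [show x.1 + y.1 = fun s => x.1 s + y.1 s from rfl]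
    exact deriv_fun_add (hx.1.differentiable (by simp) t) (hy.1.differentiable (by simp) t)
  simp [this]; try ring

lemma dbar_smul (c : ℂ) {x : SF} (hx : Smooth x) : Dbar (c • x) = c • Dbar x := by
  refine Prod.ext rfl ?_
  show (fun t => -deriv (c • x.1) t) = c • fun t => -deriv x.1 t
  funext t
  have : deriv (c • x.1) t = c * deriv x.1 t := by
    rw [show c • x.1 = fun s => c * x.1 s from rfl]
    exact deriv_const_mul c (hx.1.differentiable (by simp) t)
  simp [this]; try ring

lemma dbar_iter_add {x y : SF} (n : ℕ) (hx : Smooth x) (hy : Smooth y) :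
    Dbar^[n] (x + y) = Dbar^[n] x + Dbar^[n] y := by
  induction n generalizing x y with
  | zero => rfl
  | succ n ih =>
      rw [Function.iterate_succ_apply, Function.iterate_succ_apply,
        Function.iterate_succ_apply, dbar_add hx hy, ih hx.dbar' hy.dbar']

lemma dbar_iter_smul (c : ℂ) {x : SF} (n : ℕ) (hx : Smooth x) :
    Dbar^[n] (c • x) = c • Dbar^[n] x := by
  induction n generalizing x with
  | zero => rfl
  | succ n ih =>
      rw [Function.iterate_succ_apply, Function.iterate_succ_apply, dbar_smul c hx,
        ih hx.dbar']

lemma dx_mul {x y : SF} (hx : Smooth x) (hy : Smooth y) :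
    dx (mul x y) = mul (dx x) y + mul x (dx y) := by
  have dx1 := hx.1.differentiable (by simp)
  have dx2 := hx.2.differentiable (by simp)
  have dy1 := hy.1.differentiable (by simp)
  have dy2 := hy.2.differentiable (by simp)
  refine Prod.ext ?_ ?_ <;> funext t
  · show deriv (x.1 * y.1) t = _
    rw [show x.1 * y.1 = fun s => x.1 s * y.1 s from rfl, deriv_fun_mul (dx1 t) (dy1 t)]
    simp [mul, dx]
  · show deriv (x.1 * y.2 + x.2 * y.1) t = _
    rw [show x.1 * y.2 + x.2 * y.1 = fun s => x.1 s * y.2 s + x.2 s * y.1 s from rfl,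
      deriv_fun_add ((dx1 t).fun_mul (dy2 t)) ((dx2 t).fun_mul (dy1 t)),
      deriv_fun_mul (dx1 t) (dy2 t), deriv_fun_mul (dx2 t) (dy1 t)]
    simp [mul, dx]
    ring

lemma dbar_mul_even {x y : SF} (hx : IsEven x) (hxs : Smooth x) (hys : Smooth y) :
    Dbar (mul x y) = mul (Dbar x) y + mul x (Dbar y) := by
  unfold IsEven at hx
  refine Prod.ext ?_ ?_ <;> funext t
  · show (x.1 * y.2 + x.2 * y.1) t = _
    simp [mul, Dbar, hx]
  · show -deriv (x.1 * y.1) t = _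
    rw [show x.1 * y.1 = fun s => x.1 s * y.1 s from rfl,
      deriv_fun_mul (hxs.1.differentiable (by simp) t) (hys.1.differentiable (by simp) t)]
    simp [mul, Dbar, hx]
    ring

lemma dbar_mul_odd {x y : SF} (hx : IsOdd x) (hxs : Smooth x) (hys : Smooth y) :
    Dbar (mul x y) = mul (Dbar x) y - mul x (Dbar y) := by
  unfold IsOdd at hx
  refine Prod.ext ?_ ?_ <;> funext t
  · show (x.1 * y.2 + x.2 * y.1) t = _
    simp [mul, Dbar, hx]
  · show -deriv (x.1 * y.1) t = _
    simp [mul, Dbar, hx, deriv_zero_fun]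


/-! ### Signed parity -/

def HSign (x : SF) (s : ℂ) : Prop := (IsEven x ∧ s = 1) ∨ (IsOdd x ∧ s = -1)

lemma Homog.hsign {x : SF} {p : ℕ} (h : Homog x p) : HSign x ((-1 : ℂ)^p) := by
  rcases h with ⟨hp, he⟩ | ⟨hp, ho⟩
  · exact Or.inl ⟨he, by rw [hp]; norm_num⟩
  · exact Or.inr ⟨ho, by rw [hp]; norm_num⟩

lemma HSign.dbar {x : SF} {s : ℂ} (h : HSign x s) : HSign (Dbar x) (-s) := by
  rcases h with ⟨he, hs⟩ | ⟨ho, hs⟩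
  · exact Or.inr ⟨he.dbar, by rw [hs]⟩
  · exact Or.inl ⟨ho.dbar, by rw [hs]; norm_num⟩

lemma dbar_mul_homog {x y : SF} {s : ℂ} (hx : HSign x s) (hxs : Smooth x) (hys : Smooth y) :
    Dbar (mul x y) = mul (Dbar x) y + s • mul x (Dbar y) := by
  rcases hx with ⟨he, hs⟩ | ⟨ho, hs⟩
  · rw [hs, one_smul]; exact dbar_mul_even he hxs hys
  · rw [hs, neg_one_smul, ← sub_eq_add_neg]; exact dbar_mul_odd ho hxs hys

/-! ### Super-Leibniz formula for iterated `Dbar` -/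

lemma leib (n : ℕ) : ∀ (u : SF) (s : ℂ), HSign u s → Smooth u →
    ∃ d : ℕ → SF, d n = s^n • u ∧ ∀ v : SF, Smooth v →
      Dbar^[n] (mul u v) = ∑ i ∈ Finset.range (n+1), mul (d i) (Dbar^[i] v) := by
  induction n with
  | zero =>
      intro u s _ _
      refine ⟨fun _ => u, by simp, fun v hv => by simp⟩
  | succ n ih =>
      intro u s hs hsu
      obtain ⟨d1, hd1top, hd1sum⟩ := ih (Dbar u) (-s) hs.dbar hsu.dbar'
      obtain ⟨d2, hd2top, hd2sum⟩ := ih u s hs hsu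
      refine ⟨fun j => (if j ≤ n then d1 j else 0) + s • (if j = 0 then 0 else d2 (j-1)),
        ?_, ?_⟩
      · simp only [if_neg (by omega : ¬ n+1 ≤ n), if_neg (by omega : ¬ n+1 = 0),
          Nat.add_sub_cancel, hd2top, zero_add, smul_smul]
        rw [← pow_succ']
      · intro v hv
        rw [Function.iterate_succ_apply, dbar_mul_homog hs hsu hv,
          dbar_iter_add n (hsu.dbar'.mul' hv) ((hsu.mul' hv.dbar').smul' s),
          dbar_iter_smul s n (hsu.mul' hv.dbar'),
          hd1sum v hv, hd2sum (Dbar v) hv.dbar']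
        have e1 : ∀ j ∈ Finset.range (n+2),
            mul ((if j ≤ n then d1 j else 0) + s • (if j = 0 then 0 else d2 (j-1)))
              (Dbar^[j] v)
            = mul (if j ≤ n then d1 j else 0) (Dbar^[j] v)
              + s • mul (if j = 0 then 0 else d2 (j-1)) (Dbar^[j] v) := by
          intro j _; rw [add_mul', smul_mul']
        rw [Finset.sum_congr rfl e1, Finset.sum_add_distrib]
        congr 1
        · conv_rhs => rw [Finset.sum_range_succ]
          rw [if_neg (by omega : ¬ n+1 ≤ n), zero_mul', add_zero]
          refine Finset.sum_congr rfl fun j hj => ?_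
          rw [if_pos (Nat.lt_succ_iff.mp (Finset.mem_range.mp hj))]
        · conv_rhs => rw [Finset.sum_range_succ']
          simp only [Nat.add_sub_cancel, Nat.succ_ne_zero, if_false, ite_false, ite_true,
            reduceIte, zero_mul', smul_zero, add_zero]
          rw [Finset.smul_sum]
          refine Finset.sum_congr rfl fun j hj => ?_
          rw [Function.iterate_succ_apply]


/-! ### More parity helpers -/

lemma IsOdd.mul_left {x : SF} (hx : IsOdd x) (y : SF) : IsOdd (mul x y) := by
  unfold IsOdd at hx ⊢
  show x.1 * y.1 = 0
  rw [hx, zero_mul]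

lemma Homog.dx {x : SF} {p : ℕ} (h : Homog x p) : Homog (dx x) p := by
  rcases h with ⟨hp, he⟩ | ⟨hp, ho⟩
  · exact Or.inl ⟨hp, he.dx⟩
  · exact Or.inr ⟨hp, ho.dx⟩

lemma HSign.dop {x : SF} {s : ℂ} (h : HSign x s) : HSign (Dop x) (-s) := by
  rcases h with ⟨he, hs⟩ | ⟨ho, hs⟩
  · exact Or.inr ⟨he.dop, by rw [hs]⟩
  · exact Or.inl ⟨ho.dop, by rw [hs]; norm_num⟩

lemma HSign.dx {x : SF} {s : ℂ} (h : HSign x s) : HSign (SF.dx x) s := by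
  rcases h with ⟨he, hs⟩ | ⟨ho, hs⟩
  · exact Or.inl ⟨he.dx, hs⟩
  · exact Or.inr ⟨ho.dx, hs⟩

lemma dbar_dop_homog {f : SF} {s : ℂ} (hs : HSign f s) : Dbar (Dop f) = s • SF.dx f := by
  rcases hs with ⟨he, h⟩ | ⟨ho, h⟩
  · unfold IsEven at he
    refine Prod.ext ?_ ?_ <;> rw [h, one_smul]
    · rfl
    · show (fun t => -deriv (Dop f).1 t) = (dx f).2
      funext t
      show -deriv f.2 t = deriv f.2 t
      rw [he, deriv_zero_fun]; simp
  · unfold IsOdd at ho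
    refine Prod.ext ?_ ?_ <;> rw [h]
    · show deriv f.1 = (((-1:ℂ)) • dx f).1
      funext t
      simp [dx, ho, deriv_zero_fun, Pi.smul_apply]
    · show (fun t => -deriv (Dop f).1 t) = (((-1:ℂ)) • dx f).2
      funext t
      simp [dx, Dop, Pi.smul_apply]

lemma dbar_eq_dop {f : SF} {s : ℂ} (hs : HSign f s) : Dbar f = (-s) • Dop f := by
  rcases hs with ⟨he, h⟩ | ⟨ho, h⟩
  · unfold IsEven at he
    refine Prod.ext ?_ ?_ <;> rw [h]
    · show f.2 = ((-1:ℂ) • Dop f).1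
      simp [Dop, he, Pi.smul_apply]
    · show (fun t => -deriv f.1 t) = ((-1:ℂ) • Dop f).2
      funext t
      simp [Dop, Pi.smul_apply]
  · unfold IsOdd at ho
    refine Prod.ext ?_ ?_ <;> rw [h, neg_neg, one_smul]
    · rfl
    · show (fun t => -deriv f.1 t) = fun t => deriv f.1 t
      funext t
      simp [ho, deriv_zero_fun]

lemma odd_mul_odd' {x y w : SF} (hx : IsOdd x) (hy : IsOdd y) : mul x (mul y w) = 0 :=
  odd_mul_odd hx (hy.mul_left w)

lemma absorb3 {x y : SF} {p q : ℕ} (hx : Homog x p) (hy : Homog y q) (w : SF) :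
    ((-1:ℂ))^(p*q) • mul x (mul y w) = mul x (mul y w) := by
  rcases hx with ⟨hp, he⟩ | ⟨hp, ho⟩
  · rw [hp]; simp
  · rcases hy with ⟨hq, he'⟩ | ⟨hq, ho'⟩
    · rw [hq]; simp
    · rw [odd_mul_odd' ho ho', smul_zero]

lemma absorb {x y : SF} {p q : ℕ} (hx : Homog x p) (hy : Homog y q) :
    ((-1:ℂ))^(p*q) • mul x y = mul x y := by
  rcases hx with ⟨hp, he⟩ | ⟨hp, ho⟩
  · rw [hp]; simp
  · rcases hy with ⟨hq, he'⟩ | ⟨hq, ho'⟩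
    · rw [hq]; simp
    · rw [odd_mul_odd ho ho', smul_zero]

lemma dop_absorb3 {f a : SF} {pf pa : ℕ} (hf : Homog f pf) (ha : Homog a pa) (w : SF) :
    ((-1:ℂ))^(pf*pa) • mul (Dop f) (mul a w) = ((-1:ℂ))^pa • mul (Dop f) (mul a w) := by
  rcases hf with ⟨hp, he⟩ | ⟨hp, ho⟩
  · rcases ha with ⟨hq, he'⟩ | ⟨hq, ho'⟩
    · rw [hp, hq]
    · rw [odd_mul_odd' he.dop ho', smul_zero, smul_zero]
  · rw [hp, one_mul]

/-! ### Scalar sign lemmas -/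

lemma neg_one_pow_congr {m k : ℕ} (h : m % 2 = k % 2) : ((-1:ℂ))^m = (-1)^k := by
  conv_lhs => rw [← Nat.div_add_mod m 2]
  conv_rhs => rw [← Nat.div_add_mod k 2]
  rw [pow_add, pow_add, pow_mul, pow_mul, h]
  norm_num

lemma sgn1 (pf pa ℓ : ℕ) :
    ((-1:ℂ))^(pf*(pa+(ℓ+1))) * (((-1:ℂ))^pf)^ℓ * ((-1:ℂ))^pf = ((-1:ℂ))^(pa*pf) := by
  rw [← pow_mul, ← pow_add, ← pow_add]
  refine neg_one_pow_congr ?_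
  have he : pf*(pa+(ℓ+1)) + pf*ℓ + pf = pa*pf + (pf*ℓ + pf) * 2 := by ring
  rw [he, Nat.add_mul_mod_self_right]

lemma sgn2 (pf pa ℓ : ℕ) :
    ((-1:ℂ))^(pf*(pa+(ℓ+1))) * ((-1:ℂ))^pf = ((-1:ℂ))^(pf*(pa+ℓ)) := by
  rw [← pow_add]
  refine neg_one_pow_congr ?_
  have he : pf*(pa+(ℓ+1)) + pf = pf*(pa+ℓ) + pf * 2 := by ring
  rw [he, Nat.add_mul_mod_self_right]

/-! ### Lden basic identities -/

lemma lden_eq (t : ℂ) (f g : SF) :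
    Lden t f g = mul f (dx g) + ((1:ℂ)/2) • mul (Dop f) (Dbar g) + t • mul (dx f) g := by
  unfold Lden Xop
  rw [dbar_dbar, mul_neg', neg_mul', neg_neg]

lemma lden_shift (x c : ℂ) (f a : SF) :
    Lden x f a - c • mul (dx f) a = Lden (x - c) f a := by
  unfold Lden
  rw [sub_smul]
  abel

/-! ### The commutator of `Dbar` with `Lden` -/

lemma dbar_lden {f h : SF} {s : ℂ} (lam : ℂ) (hs : HSign f s) (hf : Smooth f) (hh : Smooth h) :
    Dbar (Lden lam f h) = s • Lden lam f (Dbar h)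
      + ((1:ℂ)/2) • mul (Dbar (Dop f)) (Dbar h) + lam • mul (dx (Dbar f)) h := by
  rw [lden_eq, lden_eq]
  rw [dbar_add ((hf.mul' hh.dx').add' ((hf.dop'.mul' hh.dbar').smul' _))
    ((hf.dx'.mul' hh).smul' _)]
  rw [dbar_add (hf.mul' hh.dx') ((hf.dop'.mul' hh.dbar').smul' _)]
  rw [dbar_smul _ (hf.dop'.mul' hh.dbar'), dbar_smul _ (hf.dx'.mul' hh)]
  rw [dbar_mul_homog hs hf hh.dx', dbar_mul_homog hs.dop hf.dop' hh.dbar',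
    dbar_mul_homog (hs.dx) hf.dx' hh]
  simp only [← dx_dbar, dbar_dbar]
  rw [dbar_eq_dop hs]
  simp only [mul_neg', smul_mul', mul_smul'', smul_add, smul_smul, smul_neg]
  module


/-! ### Main induction -/

theorem aux_main (lam mu : ℂ) (f a : SF) (pf pa : ℕ)
    (hf : Homog f pf) (ha : Homog a pa) (hfs : Smooth f) (has : Smooth a) :
    ∀ ℓ : ℕ, ∃ c : ℕ → SF, c ℓ = Lden (mu - lam - (ℓ:ℂ)/2) f a ∧
      ∀ h : SF, Smooth h →
        Lden mu f (mul a (Dbar^[ℓ] h))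
          - (-1:ℂ)^(pf*(pa+ℓ)) • mul a (Dbar^[ℓ] (Lden lam f h))
        = ∑ i ∈ Finset.range (ℓ+1), mul (c i) (Dbar^[i] h) := by
  have hsf : HSign f ((-1:ℂ)^pf) := hf.hsign
  have hsa : HSign a ((-1:ℂ)^pa) := ha.hsign
  intro ℓ
  induction ℓ with
  | zero =>
      refine ⟨fun _ => Lden (mu - lam - ((0:ℕ):ℂ)/2) f a, rfl, ?_⟩
      intro h hh
      simp only [Function.iterate_zero_apply, Finset.sum_range_one, Nat.add_zero]
      have h0 : mu - lam - ((0:ℕ):ℂ)/2 = mu - lam := by norm_num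
      rw [h0, lden_eq, lden_eq, lden_eq]
      rw [dx_mul has hh, dbar_mul_homog hsa has hh]
      -- distribute
      simp only [mul_add', add_mul', mul_smul'', smul_mul', smul_add, smul_smul, mul_assoc']
      rw [mul_left_comm' a f (dx h), mul_left_comm' a (Dop f) (Dbar h),
        mul_left_comm' a (dx f) h]
      have k1 := absorb3 hf ha (dx h)
      have k2 := absorb3 hf.dx ha h
      have k3 := dop_absorb3 hf ha (Dbar h)
      -- goal as linear combination
      rw [show ((-1:ℂ))^(pf*pa) * lam = lam * ((-1:ℂ))^(pf*pa) from mul_comm _ _]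
      rw [k1]
      rw [show ((-1:ℂ))^(pf*pa) * (1/2) = (1/2 : ℂ) * ((-1:ℂ))^(pf*pa) from mul_comm _ _]
      rw [mul_smul ((1:ℂ)/2) (((-1:ℂ))^(pf*pa)) (mul (Dop f) (mul a (Dbar h))), k3]
      rw [mul_smul lam (((-1:ℂ))^(pf*pa)) (mul (dx f) (mul a h)), k2]
      simp only [zero_add, Finset.sum_range_one, Function.iterate_zero_apply]
      module
  | succ ℓ ih =>
      obtain ⟨c, hc, hsum⟩ := ih
      have hu1 : HSign (Dbar (Dop f)) ((-1:ℂ)^pf) := by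
        have := hsf.dop.dbar; rwa [neg_neg] at this
      obtain ⟨d1, hd1top, hd1sum⟩ := leib ℓ (Dbar (Dop f)) ((-1:ℂ)^pf) hu1 hfs.dop'.dbar'
      obtain ⟨d2, hd2top, hd2sum⟩ :=
        leib ℓ (dx (Dbar f)) (-((-1:ℂ)^pf)) (hsf.dbar.dx) hfs.dbar'.dx'
      set E1 : ℂ := (-1:ℂ)^(pf*(pa+(ℓ+1))) with hE1
      refine ⟨fun j => (if j = 0 then 0 else (c (j-1) - (E1 * (1/2)) • mul a (d1 (j-1))))
          - (if j = ℓ+1 then 0 else (E1 * lam) • mul a (d2 j)), ?_, ?_⟩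
      · simp only [if_neg (Nat.succ_ne_zero ℓ), ite_true, if_true, Nat.add_sub_cancel,
          sub_zero, if_pos]
        rw [hc, hd1top, dbar_dop_homog hsf]
        rw [mul_smul'', mul_smul'', smul_smul, smul_smul]
        have hsc : E1 * (1/2) * (((-1:ℂ))^pf)^ℓ * ((-1:ℂ))^pf
            = (1/2 : ℂ) * ((-1:ℂ))^(pa*pf) := by
          rw [hE1]
          rw [show ((-1:ℂ))^(pf*(pa+(ℓ+1))) * (1/2) * ((((-1:ℂ))^pf)^ℓ) * ((-1:ℂ))^pf
            = ((-1:ℂ))^(pf*(pa+(ℓ+1))) * (((-1:ℂ))^pf)^ℓ * ((-1:ℂ))^pf * (1/2) from by ring,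
            sgn1 pf pa ℓ]
          ring
        have h2 : (E1 * (1 / 2) * ((-1:ℂ) ^ pf) ^ ℓ * (-1:ℂ) ^ pf) • mul a (dx f)
            = ((1:ℂ)/2) • mul a (dx f) := by
          rw [hsc, mul_smul, absorb ha hf.dx]
        rw [h2, mul_comm' a (dx f), lden_shift]
        rw [show mu - lam - (ℓ:ℂ)/2 - 1/2 = mu - lam - (↑(ℓ+1):ℂ)/2 from by push_cast; ring]
      · intro h hh
        have hhb := hh.dbar'
        simp only [Function.iterate_succ_apply]
        rw [dbar_lden lam hsf hfs hh]
        rw [dbar_iter_add ℓ (((hfs.lden' lam hhb).smul' _).add'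
            (((hfs.dop'.dbar'.mul' hhb)).smul' _)) ((hfs.dbar'.dx'.mul' hh).smul' _)]
        rw [dbar_iter_add ℓ ((hfs.lden' lam hhb).smul' _) ((hfs.dop'.dbar'.mul' hhb).smul' _)]
        rw [dbar_iter_smul _ ℓ (hfs.lden' lam hhb), dbar_iter_smul _ ℓ (hfs.dop'.dbar'.mul' hhb),
          dbar_iter_smul _ ℓ (hfs.dbar'.dx'.mul' hh)]
        rw [mul_add', mul_add', mul_smul'', mul_smul'', mul_smul'']
        rw [smul_add, smul_add, smul_smul, smul_smul, smul_smul]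
        rw [sgn2 pf pa ℓ]
        rw [sub_add_eq_sub_sub, sub_add_eq_sub_sub]
        rw [hsum (Dbar h) hhb]
        rw [hd1sum (Dbar h) hhb, hd2sum h hh]
        rw [mul_sum a _ _, mul_sum a _ _, Finset.smul_sum, Finset.smul_sum]
        have hP : ∀ x ∈ Finset.range (ℓ+1+1),
            mul ((if x = 0 then 0 else c (x-1) - (E1*(1/2)) • mul a (d1 (x-1)))
              - (if x = ℓ+1 then 0 else (E1*lam) • mul a (d2 x))) (Dbar^[x] h)
            = mul (if x = 0 then 0 else c (x-1) - (E1*(1/2)) • mul a (d1 (x-1))) (Dbar^[x] h)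
              - mul (if x = ℓ+1 then 0 else (E1*lam) • mul a (d2 x)) (Dbar^[x] h) :=
          fun x _ => sub_mul' _ _ _
        rw [Finset.sum_congr rfl hP, Finset.sum_sub_distrib]
        congr 1
        · conv_rhs => rw [Finset.sum_range_succ']
          simp only [Nat.succ_ne_zero, if_false, ite_false, reduceIte, Nat.add_sub_cancel,
            zero_mul', add_zero]
          have hbody : ∀ i ∈ Finset.range (ℓ+1),
              mul (c i - (E1*(1/2)) • mul a (d1 i)) (Dbar^[i+1] h)
              = mul (c i) (Dbar^[i] (Dbar h))
                - (E1*(1/2)) • mul a (mul (d1 i) (Dbar^[i] (Dbar h))) := by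
            intro i _
            rw [sub_mul', smul_mul', mul_assoc', Function.iterate_succ_apply]
          rw [Finset.sum_congr rfl hbody, Finset.sum_sub_distrib]
        · conv_rhs => rw [Finset.sum_range_succ]
          rw [if_pos rfl, zero_mul', add_zero]
          refine Finset.sum_congr rfl fun x hx => ?_
          rw [if_neg (by have := Finset.mem_range.mp hx; omega), smul_mul', mul_assoc']

end SF

open SF

/-- equivariance of the principal symbol: for `A = a D̄^ℓ`, the
operator `L^μ_{X_f} ∘ A - (-1)^{p(f)p(A)} A ∘ L^λ_{X_f}` is again of order `≤ ℓ`
in `D̄`, and its `D̄^ℓ`-coefficient is `L^{μ-λ-ℓ/2}_{X_f}(a)`. -/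
theorem principal_symbol_equivariant (lam mu : ℂ) (ℓ : ℕ) (f a : SF) (pf pa : ℕ)
    (hf : Homog f pf) (ha : Homog a pa) (hfs : Smooth f) (has : Smooth a) :
    ∃ c : ℕ → SF, c ℓ = Lden (mu - lam - (ℓ:ℂ)/2) f a ∧
      ∀ h : SF, Smooth h →
        Lden mu f (mul a (Dbar^[ℓ] h))
          - (-1:ℂ)^(pf*(pa+ℓ)) • mul a (Dbar^[ℓ] (Lden lam f h))
        = ∑ i ∈ Finset.range (ℓ+1), mul (c i) (Dbar^[i] h) :=
  SF.aux_main lam mu f a pf pa hf ha hfs has ℓ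
end
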